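/- In the 3-VAS V = {(0,1,1), (1,2,−1), (1,−1,2)}, for every n ∈ ℕ the vector (2n, n+1, n+1) is reachable (via the path (0,1,1), ((1,2,−1),(1,−1,2))ⁿ), but for every n ≥ 1 the vector (2n, n+1, n+1) is not box-reachable. Consequently, there exist reachable vectors arbitrarily deep in the positive octant that are not box-reachable, so the reachability set and box-reachability set of a 3-VAS need not coincide on any set of the form [W,∞)³. -/

import Mathlib

/-- `t` is reachable in the `d`-VAS `V` via the specific path `π`. -/
def ReachVia {d : ℕ} (V : Finset (Fin d → ℤ)) (π : List (Fin d → ℤ))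
    (t : Fin d → ℤ) : Prop :=
  (∀ v ∈ π, v ∈ V) ∧ π.sum = t ∧
    ∀ j : ℕ, ∀ i : Fin d, 0 ≤ ((π.take j).sum) i

/-- `t` is reachable in the `d`-VAS `V`. -/
def Reach {d : ℕ} (V : Finset (Fin d → ℤ)) (t : Fin d → ℤ) : Prop :=
  ∃ π : List (Fin d → ℤ), ReachVia V π t

/-- `t` is box-reachable in the `d`-VAS `V`. -/
def BoxReach {d : ℕ} (V : Finset (Fin d → ℤ)) (t : Fin d → ℤ) : Prop :=
  ∃ π : List (Fin d → ℤ), (∀ v ∈ π, v ∈ V) ∧ π.sum = t ∧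
    ∀ j : ℕ, ∀ i : Fin d, 0 ≤ ((π.take j).sum) i ∧ ((π.take j).sum) i ≤ t i

/-!
Along a box-respecting path for `t`, the first partial sum is the first step, so that step is
`≥ 0`, and the penultimate partial sum is `t - v` for the last step `v`, so `v ≥ 0` as well. In
`V = {a, b, c}` only `a = (0,1,1)` is `≥ 0`. The functional `x₁ + x₂ - x₀` vanishes on `b` and
`c` and is `2` on `a` and on `(2n, n+1, n+1)`, so a path to `(2n, n+1, n+1)` uses `a` exactly
once; it cannot start and end with `a` unless it is `[a]`, which reaches `(0,1,1)` only.
-/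

namespace List

variable {M : Type*} [AddCommMonoid M] [PartialOrder M]

theorem nonneg_of_forall_sum_take_nonneg {v : M} {l : List M}
    (h : ∀ j, 0 ≤ ((v :: l).take j).sum) : 0 ≤ v := by
  simpa using h 1

theorem nonneg_of_forall_sum_take_le_sum [IsOrderedCancelAddMonoid M] {v : M} {l : List M}
    (h : ∀ j, ((l ++ [v]).take j).sum ≤ (l ++ [v]).sum) : 0 ≤ v := by
  simpa using h l.length

theorem add_sum_take_flatten_replicate_pair_nonneg [IsOrderedAddMonoid M] {a b c : M}
    (ha : 0 ≤ a) (hab : 0 ≤ a + b) (hbc : 0 ≤ b + c) (n j : ℕ) :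
    0 ≤ a + ((replicate n [b, c]).flatten.take j).sum := by
  induction n generalizing a j with
  | zero => simpa using ha
  | succ n ih =>
    rcases j with _ | _ | j
    · simpa using ha
    · simpa [replicate_succ] using hab
    · have := ih (a := a + (b + c)) (add_nonneg ha hbc)
        (by simpa only [add_right_comm a, add_assoc] using add_nonneg hab hbc) j
      simpa [replicate_succ, add_assoc] using this

end List

theorem boxReach_iff {d : ℕ} {V : Finset (Fin d → ℤ)} {t : Fin d → ℤ} :
    BoxReach V t ↔ ∃ π : List (Fin d → ℤ), (∀ v ∈ π, v ∈ V) ∧ π.sum = t ∧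
      ∀ j, 0 ≤ (π.take j).sum ∧ (π.take j).sum ≤ t := by
  simp only [BoxReach, Pi.le_def, Pi.zero_apply, forall_and]

namespace ThreeVAS

def a : Fin 3 → ℤ := ![0, 1, 1]
def b : Fin 3 → ℤ := ![1, 2, -1]
def c : Fin 3 → ℤ := ![1, -1, 2]

def V : Finset (Fin 3 → ℤ) := {a, b, c}

def target (n : ℕ) : Fin 3 → ℤ := ![2 * (n : ℤ), (n : ℤ) + 1, (n : ℤ) + 1]

def path (n : ℕ) : List (Fin 3 → ℤ) := a :: (List.replicate n [b, c]).flatten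

theorem target_eq (n : ℕ) : target n = a + n • (b + c) := by
  ext i
  fin_cases i <;> simp [target, a, b, c, add_comm, mul_comm]

theorem reachVia_path (n : ℕ) : ReachVia V (path n) (target n) := by
  refine ⟨by simp +contextual [path, V], ?_, ?_⟩
  · rw [target_eq]
    simp [path, List.sum_flatten]
  · rintro (_ | j) i
    · simp
    · have := List.add_sum_take_flatten_replicate_pair_nonneg (a := a) (b := b) (c := c)
        ?_ ?_ ?_ n j
      · simpa [path] using this i
      all_goals rw [Pi.le_def]; decide

theorem eq_a_of_mem_of_nonneg {v : Fin 3 → ℤ} (hv : v ∈ V) (h : 0 ≤ v) : v = a := by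
  simp only [V, Finset.mem_insert, Finset.mem_singleton] at hv
  rcases hv with rfl | rfl | rfl
  · rfl
  · exact absurd (h 2) (by decide)
  · exact absurd (h 1) (by decide)

def excess : (Fin 3 → ℤ) →+ ℤ :=
  Pi.evalAddMonoidHom (fun _ => ℤ) 1 + Pi.evalAddMonoidHom _ 2 - Pi.evalAddMonoidHom _ 0

theorem excess_nonneg_of_mem {v : Fin 3 → ℤ} (hv : v ∈ V) : 0 ≤ excess v := by
  simp only [V, Finset.mem_insert, Finset.mem_singleton] at hv
  rcases hv with rfl | rfl | rfl <;> simp [excess, a, b, c]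

theorem excess_sum_nonneg {l : List (Fin 3 → ℤ)} (hl : ∀ v ∈ l, v ∈ V) :
    0 ≤ excess l.sum := by
  rw [map_list_sum]
  exact List.sum_nonneg <| by simpa using fun v hv => excess_nonneg_of_mem (hl v hv)

theorem excess_a : excess a = 2 := by simp [excess, a]

theorem excess_target (n : ℕ) : excess (target n) = 2 := by
  show (n + 1 : ℤ) + (n + 1) - 2 * n = 2
  ring

theorem not_boxReach_target {n : ℕ} (hn : 1 ≤ n) : ¬ BoxReach V (target n) := by
  rw [boxReach_iff]
  rintro ⟨_ | ⟨x, l⟩, hV, hsum, hbox⟩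
  · simpa [excess_target] using congrArg excess hsum
  have hx : x = a := eq_a_of_mem_of_nonneg (hV x (by simp))
    (List.nonneg_of_forall_sum_take_nonneg fun j => (hbox j).1)
  subst hx
  obtain rfl | ⟨l, y, rfl⟩ := l.eq_nil_or_concat'
  · have : n = 0 := by simpa [a, target] using (congrFun hsum 0).symm
    omega
  have hy : y = a := eq_a_of_mem_of_nonneg (hV y (by simp))
    (List.nonneg_of_forall_sum_take_le_sum (l := a :: l) fun j => hsum ▸ (hbox j).2)
  subst hy
  have hl : 0 ≤ excess l.sum := excess_sum_nonneg fun v hv => hV v (by simp [hv])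
  have := congrArg excess hsum
  rw [List.sum_cons, List.sum_append, List.sum_singleton, map_add, map_add, excess_a,
    excess_target] at this
  omega

end ThreeVAS

/-- In the 3-VAS `{(0,1,1), (1,2,−1), (1,−1,2)}`: every `(2n, n+1, n+1)` is
reachable via the path `(0,1,1), ((1,2,−1),(1,−1,2))ⁿ`, but not box-reachable
for `n ≥ 1`; consequently there are reachable vectors arbitrarily deep in the
positive octant that are not box-reachable. -/
theorem example_3VAS_reach_not_boxReach :
    (∀ n : ℕ,
      ReachVia ({![(0 : ℤ), 1, 1], ![1, 2, -1], ![1, -1, 2]} : Finset (Fin 3 → ℤ))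
        ([![(0 : ℤ), 1, 1]] ++
          (List.replicate n [![(1 : ℤ), 2, -1], ![1, -1, 2]]).flatten)
        ![2 * (n : ℤ), (n : ℤ) + 1, (n : ℤ) + 1]) ∧
    (∀ n : ℕ, 1 ≤ n →
      ¬ BoxReach ({![(0 : ℤ), 1, 1], ![1, 2, -1], ![1, -1, 2]} : Finset (Fin 3 → ℤ))
        ![2 * (n : ℤ), (n : ℤ) + 1, (n : ℤ) + 1]) ∧
    (∀ W : ℕ, ∃ t : Fin 3 → ℤ, (∀ i, (W : ℤ) ≤ t i) ∧
      Reach ({![(0 : ℤ), 1, 1], ![1, 2, -1], ![1, -1, 2]} : Finset (Fin 3 → ℤ)) t ∧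
      ¬ BoxReach ({![(0 : ℤ), 1, 1], ![1, 2, -1], ![1, -1, 2]} : Finset (Fin 3 → ℤ)) t) := by
  refine ⟨ThreeVAS.reachVia_path, fun n => ThreeVAS.not_boxReach_target, fun W => ?_⟩
  refine ⟨ThreeVAS.target (W + 1), fun i => ?_, ⟨_, ThreeVAS.reachVia_path _⟩,
    ThreeVAS.not_boxReach_target (by omega)⟩
  fin_cases i <;> simp [ThreeVAS.target] <;> omega
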